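/- arXiv:1701.03999 — 2 statements merged into one kernel-verified Lean document; each statement's English description precedes it below -/
import Mathlib

section
/- Let D be a knot diagram that is the closure of a positive braid (modelled as a cyclic word in the positive braid generators) and is a knot. For any subloop γ₁ of D, namely one of the two arcs γ₁, γ₂ into which D is split at a crossing c, the number of crossings where γ₁ passes over γ₂ equals the number of crossings where γ₁ passes under γ₂, i.e. i_o(γ₁,γ₂) - i_u(γ₁,γ₂) = 0. -/
private lemma iterMod {α : Type*} (f : α → α) (x : α) (d : ℕ) (hd : 0 < d)
    (hx : f^[d] x = x) : ∀ m, f^[m] x = f^[m % d] x := by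
  intro m
  induction m using Nat.strong_induction_on with
  | _ m ih =>
    by_cases h : m < d
    · rw [Nat.mod_eq_of_lt h]
    · push_neg at h
      have h1 : m = (m - d) + d := by omega
      conv_lhs => rw [h1]
      rw [Function.iterate_add_apply, hx, ih (m - d) (by omega)]
      congr 1
      conv_rhs => rw [h1]
      rw [Nat.add_mod_right]


/-! A closed positive braid diagram on `p` strands is modeled as a cyclic word
of `N` positive crossings: the `t`-th crossing is `σ_{a t}`, acting between
levels `a t` and `a t + 1`.  A point of the diagram is a pair
`(t, l) : Fin N × Fin p` (a time slice and a level); following the knot one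
step applies the transposition of the current crossing and moves to the next
time slice (cyclically). -/

/-- The lower strand-level entering crossing `t`; by the positivity
convention, this is the level of the overstrand at the crossing. -/
def braidLo (p N : ℕ) (a : Fin N → ℕ) (ha : ∀ t, a t + 1 < p) (t : Fin N) : Fin p :=
  ⟨a t, lt_trans (Nat.lt_succ_self _) (ha t)⟩

/-- The upper strand-level entering crossing `t`; this is the level of the
understrand at the crossing. -/
def braidHi (p N : ℕ) (a : Fin N → ℕ) (ha : ∀ t, a t + 1 < p) (t : Fin N) : Fin p :=
  ⟨a t + 1, ha t⟩

/-- Following the closed braid one step: apply the transposition of the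
current crossing and advance (cyclically) to the next time slice. -/
def braidNext (p N : ℕ) (hN : 0 < N) (a : Fin N → ℕ) (ha : ∀ t, a t + 1 < p) :
    Fin N × Fin p → Fin N × Fin p :=
  fun s => (⟨(s.1.val + 1) % N, Nat.mod_lt _ hN⟩,
    Equiv.swap (braidLo p N a ha s.1) (braidHi p N a ha s.1) s.2)

/-- Lemma 11: for a closed positive braid whose closure is a knot, and any
crossing `c`, the loop `γ₁` obtained by following the strand from `c` until
first returning to `c` crosses the rest `γ₂` of the knot as an overstrand
exactly as often as it does as an understrand: `i_o(γ₁,γ₂) = i_u(γ₁,γ₂)`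
(equivalently, `i(c) = 0` for every chord of the Gauss diagram, all of whose
signs are `+1`). -/
theorem stmt_9 (p N : ℕ) (hN : 0 < N) (a : Fin N → ℕ) (ha : ∀ t, a t + 1 < p)
    -- the closure is a knot: the traversal visits every point of the diagram
    (hknot : ∀ s s' : Fin N × Fin p, ∃ m : ℕ, (braidNext p N hN a ha)^[m] s = s')
    (c : Fin N)
    -- `γ₁`: follow the strand from the overstrand exit of crossing `c` for
    -- `m₀` steps, `m₀` minimal so that the strand first returns to `c`
    (m₀ : ℕ)
    (hret : (braidNext p N hN a ha)^[m₀]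
        (braidNext p N hN a ha (c, braidLo p N a ha c)) = (c, braidLo p N a ha c) ∨
      (braidNext p N hN a ha)^[m₀]
        (braidNext p N hN a ha (c, braidLo p N a ha c)) = (c, braidHi p N a ha c))
    (hmin : ∀ m < m₀,
      (braidNext p N hN a ha)^[m]
          (braidNext p N hN a ha (c, braidLo p N a ha c)) ≠ (c, braidLo p N a ha c) ∧
      (braidNext p N hN a ha)^[m]
          (braidNext p N hN a ha (c, braidLo p N a ha c)) ≠ (c, braidHi p N a ha c)) :
    -- `i_o`: crossings between `γ₁` and `γ₂` with `γ₁` the overstrand;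
    -- `i_u`: those with `γ₁` the understrand.  Claim: `i_o = i_u`.
    ((Finset.univ.filter fun t : Fin N => t ≠ c ∧
        (t, braidLo p N a ha t) ∈ (Finset.range m₀).image
          (fun m => (braidNext p N hN a ha)^[m]
            (braidNext p N hN a ha (c, braidLo p N a ha c))) ∧
        (t, braidHi p N a ha t) ∉ (Finset.range m₀).image
          (fun m => (braidNext p N hN a ha)^[m]
            (braidNext p N hN a ha (c, braidLo p N a ha c)))).card
      =
      (Finset.univ.filter fun t : Fin N => t ≠ c ∧
        (t, braidHi p N a ha t) ∈ (Finset.range m₀).image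
          (fun m => (braidNext p N hN a ha)^[m]
            (braidNext p N hN a ha (c, braidLo p N a ha c))) ∧
        (t, braidLo p N a ha t) ∉ (Finset.range m₀).image
          (fun m => (braidNext p N hN a ha)^[m]
            (braidNext p N hN a ha (c, braidLo p N a ha c)))).card) := by   classical
  set f := braidNext p N hN a ha with hf_def
  set lo := braidLo p N a ha with hlo_def
  set hi := braidHi p N a ha with hhi_def
  set x₀ := f (c, lo c) with hx₀_def
  set S : Finset (Fin N × Fin p) := (Finset.range m₀).image (fun m => f^[m] x₀) with hS_def
  -- basic facts
  have hlo_ne_hi : ∀ t, lo t ≠ hi t := by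
    intro t h
    have := congrArg Fin.val h
    simp [hlo_def, hhi_def, braidLo, braidHi] at this
  have hfinj : Function.Injective f := by
    intro s s' h
    have h1 : (s.1.val + 1) % N = (s'.1.val + 1) % N := by
      have := congrArg (fun z => z.1.val) h
      simpa [hf_def, braidNext] using this
    have hfst : s.1 = s'.1 := by
      have hmod : s.1.val % N = s'.1.val % N :=
        Nat.ModEq.add_right_cancel' 1 h1
      have := s.1.isLt; have := s'.1.isLt
      apply Fin.ext
      rwa [Nat.mod_eq_of_lt s.1.isLt, Nat.mod_eq_of_lt s'.1.isLt] at hmod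
    have h2 : Equiv.swap (lo s.1) (hi s.1) s.2 = Equiv.swap (lo s.1) (hi s.1) s'.2 := by
      have := congrArg (fun z => z.2) h
      simp only [hf_def, braidNext] at this
      rw [hfst] at this ⊢
      exact this
    have hsnd : s.2 = s'.2 := (Equiv.swap _ _).injective h2
    exact Prod.ext hfst hsnd
  -- the return point is (c, hi c)
  have hrethi : f^[m₀] x₀ = (c, hi c) := by
    rcases hret with hret | hret
    · exfalso
      have hper : f^[m₀ + 1] x₀ = x₀ := by
        rw [Function.iterate_succ_apply', hret, hx₀_def]
      obtain ⟨m, hm⟩ := hknot x₀ (c, hi c)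
      rw [iterMod f x₀ (m₀ + 1) (Nat.succ_pos _) hper m] at hm
      have hr : m % (m₀ + 1) < m₀ + 1 := Nat.mod_lt _ (Nat.succ_pos _)
      rcases Nat.lt_succ_iff_lt_or_eq.mp hr with h | h
      · exact (hmin _ h).2 hm
      · rw [h, hret] at hm
        exact hlo_ne_hi c (congrArg Prod.snd hm)
    · exact hret
  -- injectivity along the loop
  have hinj : ∀ i ≤ m₀, ∀ j ≤ m₀, f^[i] x₀ = f^[j] x₀ → i = j := by
    have key : ∀ i j, i < j → j ≤ m₀ → f^[i] x₀ ≠ f^[j] x₀ := by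
      intro i j hij hj he
      have hd : f^[j - i] x₀ = x₀ := by
        apply Function.Injective.iterate hfinj i
        rw [← Function.iterate_add_apply]
        rw [(by omega : i + (j - i) = j)]
        exact he.symm
      have hd0 : 0 < j - i := by omega
      have hiter := iterMod f x₀ (j - i) hd0 hd m₀
      have hlt : m₀ % (j - i) < m₀ := lt_of_lt_of_le (Nat.mod_lt _ hd0) (by omega)
      exact (hmin _ hlt).2 (hiter.symm.trans hrethi)
    intro i hi' j hj' he
    rcases lt_trichotomy i j with h | h | h
    · exact absurd he (key i j h hj')
    · exact h
    · exact absurd he.symm (key j i h hi')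
  -- the step rule for levels
  have stepG : ∀ s : Fin N × Fin p, (((f s).2.val : ℤ)) - s.2.val =
      (if s.2 = lo s.1 then 1 else 0) - (if s.2 = hi s.1 then 1 else 0) := by
    rintro ⟨t, l⟩
    simp only [hf_def, braidNext]
    by_cases hL : l = lo t
    · subst hL
      rw [Equiv.swap_apply_left]
      simp [hlo_ne_hi t, (hlo_ne_hi t).symm, hlo_def, hhi_def, braidLo, braidHi]
    · by_cases hH : l = hi t
      · subst hH
        rw [Equiv.swap_apply_right]
        simp [hL, hlo_def, hhi_def, braidLo, braidHi]
      · rw [Equiv.swap_apply_of_ne_of_ne hL hH]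
        simp [hL, hH]
  -- the telescoping identity
  have hx₀snd : x₀.2 = hi c := by
    simp only [hx₀_def, hf_def, braidNext]
    exact Equiv.swap_apply_left _ _
  have keycard :
      ((Finset.range m₀).filter fun m => (f^[m] x₀).2 = lo (f^[m] x₀).1).card =
      ((Finset.range m₀).filter fun m => (f^[m] x₀).2 = hi (f^[m] x₀).1).card := by
    have h1 : ∑ m ∈ Finset.range m₀,
        ((((f^[m + 1] x₀).2.val : ℤ)) - ((f^[m] x₀).2.val : ℤ)) =
        (((f^[m₀] x₀).2.val : ℤ)) - (((f^[0] x₀).2.val : ℤ)) :=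
      Finset.sum_range_sub (fun m => (((f^[m] x₀).2.val : ℤ))) m₀
    have h2 : ∀ m, (((f^[m + 1] x₀).2.val : ℤ)) - ((f^[m] x₀).2.val : ℤ) =
        (if (f^[m] x₀).2 = lo (f^[m] x₀).1 then (1:ℤ) else 0) -
        (if (f^[m] x₀).2 = hi (f^[m] x₀).1 then (1:ℤ) else 0) := by
      intro m
      rw [Function.iterate_succ_apply']
      exact stepG (f^[m] x₀)
    rw [Finset.sum_congr rfl (fun m _ => h2 m), Finset.sum_sub_distrib,
      Finset.sum_boole, Finset.sum_boole] at h1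
    have h3 : (((f^[m₀] x₀).2.val : ℤ)) - (((f^[0] x₀).2.val : ℤ)) = 0 := by
      rw [Function.iterate_zero_apply, hrethi, hx₀snd]
      ring
    rw [h3] at h1
    exact_mod_cast sub_eq_zero.mp h1
  -- bijections between loop steps and crossings
  have cardLo :
      ((Finset.range m₀).filter fun m => (f^[m] x₀).2 = lo (f^[m] x₀).1).card =
      (Finset.univ.filter fun t : Fin N => t ≠ c ∧ (t, lo t) ∈ S).card := by
    apply Finset.card_bij (fun m _ => (f^[m] x₀).1)
    · intro m hm
      simp only [Finset.mem_filter, Finset.mem_range] at hm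
      obtain ⟨hmlt, hmlo⟩ := hm
      have heq : f^[m] x₀ = ((f^[m] x₀).1, lo (f^[m] x₀).1) := Prod.ext rfl hmlo
      simp only [Finset.mem_filter, Finset.mem_univ, true_and]
      constructor
      · intro hc
        rw [hc] at heq
        exact (hmin m hmlt).1 heq
      · rw [hS_def]
        exact Finset.mem_image.mpr ⟨m, Finset.mem_range.mpr hmlt, heq⟩
    · intro m₁ hm₁ m₂ hm₂ hfst
      simp only [Finset.mem_filter, Finset.mem_range] at hm₁ hm₂
      have e1 : f^[m₁] x₀ = ((f^[m₁] x₀).1, lo (f^[m₁] x₀).1) := Prod.ext rfl hm₁.2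
      have e2 : f^[m₂] x₀ = ((f^[m₂] x₀).1, lo (f^[m₂] x₀).1) := Prod.ext rfl hm₂.2
      apply hinj m₁ (le_of_lt hm₁.1) m₂ (le_of_lt hm₂.1)
      rw [e1, e2, hfst]
    · intro t ht
      simp only [Finset.mem_filter, Finset.mem_univ, true_and] at ht
      obtain ⟨-, htS⟩ := ht
      rw [hS_def] at htS
      obtain ⟨m, hm, hmeq⟩ := Finset.mem_image.mp htS
      refine ⟨m, ?_, ?_⟩
      · simp only [Finset.mem_filter, Finset.mem_range] at hm ⊢
        refine ⟨hm, ?_⟩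
        rw [hmeq]
      · rw [hmeq]
  have cardHi :
      ((Finset.range m₀).filter fun m => (f^[m] x₀).2 = hi (f^[m] x₀).1).card =
      (Finset.univ.filter fun t : Fin N => t ≠ c ∧ (t, hi t) ∈ S).card := by
    apply Finset.card_bij (fun m _ => (f^[m] x₀).1)
    · intro m hm
      simp only [Finset.mem_filter, Finset.mem_range] at hm
      obtain ⟨hmlt, hmhi⟩ := hm
      have heq : f^[m] x₀ = ((f^[m] x₀).1, hi (f^[m] x₀).1) := Prod.ext rfl hmhi
      simp only [Finset.mem_filter, Finset.mem_univ, true_and]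
      constructor
      · intro hc
        rw [hc] at heq
        exact (hmin m hmlt).2 heq
      · rw [hS_def]
        exact Finset.mem_image.mpr ⟨m, Finset.mem_range.mpr hmlt, heq⟩
    · intro m₁ hm₁ m₂ hm₂ hfst
      simp only [Finset.mem_filter, Finset.mem_range] at hm₁ hm₂
      have e1 : f^[m₁] x₀ = ((f^[m₁] x₀).1, hi (f^[m₁] x₀).1) := Prod.ext rfl hm₁.2
      have e2 : f^[m₂] x₀ = ((f^[m₂] x₀).1, hi (f^[m₂] x₀).1) := Prod.ext rfl hm₂.2
      apply hinj m₁ (le_of_lt hm₁.1) m₂ (le_of_lt hm₂.1)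
      rw [e1, e2, hfst]
    · intro t ht
      simp only [Finset.mem_filter, Finset.mem_univ, true_and] at ht
      obtain ⟨-, htS⟩ := ht
      rw [hS_def] at htS
      obtain ⟨m, hm, hmeq⟩ := Finset.mem_image.mp htS
      refine ⟨m, ?_, ?_⟩
      · simp only [Finset.mem_filter, Finset.mem_range] at hm ⊢
        refine ⟨hm, ?_⟩
        rw [hmeq]
      · rw [hmeq]
  -- split and conclude
  have hAB : (Finset.univ.filter fun t : Fin N => t ≠ c ∧ (t, lo t) ∈ S).card =
      (Finset.univ.filter fun t : Fin N => t ≠ c ∧ (t, hi t) ∈ S).card := by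
    rw [← cardLo, ← cardHi, keycard]
  have e1 : (Finset.univ.filter fun t : Fin N =>
        t ≠ c ∧ (t, lo t) ∈ S ∧ (t, hi t) ∉ S).card +
      (Finset.univ.filter fun t : Fin N =>
        t ≠ c ∧ (t, lo t) ∈ S ∧ (t, hi t) ∈ S).card =
      (Finset.univ.filter fun t : Fin N => t ≠ c ∧ (t, lo t) ∈ S).card := by
    rw [← Finset.card_filter_add_card_filter_not
      (s := Finset.univ.filter fun t : Fin N => t ≠ c ∧ (t, lo t) ∈ S)
      (p := fun t => (t, hi t) ∈ S), Finset.filter_filter, Finset.filter_filter, add_comm]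
    congr 1 <;> · apply congrArg
                  apply Finset.filter_congr
                  intro x _
                  tauto
  have e2 : (Finset.univ.filter fun t : Fin N =>
        t ≠ c ∧ (t, hi t) ∈ S ∧ (t, lo t) ∉ S).card +
      (Finset.univ.filter fun t : Fin N =>
        t ≠ c ∧ (t, hi t) ∈ S ∧ (t, lo t) ∈ S).card =
      (Finset.univ.filter fun t : Fin N => t ≠ c ∧ (t, hi t) ∈ S).card := by
    rw [← Finset.card_filter_add_card_filter_not
      (s := Finset.univ.filter fun t : Fin N => t ≠ c ∧ (t, hi t) ∈ S)
      (p := fun t => (t, lo t) ∈ S), Finset.filter_filter, Finset.filter_filter, add_comm]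
    congr 1 <;> · apply congrArg
                  apply Finset.filter_congr
                  intro x _
                  tauto
  have e3 : (Finset.univ.filter fun t : Fin N =>
        t ≠ c ∧ (t, lo t) ∈ S ∧ (t, hi t) ∈ S).card =
      (Finset.univ.filter fun t : Fin N =>
        t ≠ c ∧ (t, hi t) ∈ S ∧ (t, lo t) ∈ S).card := by
    apply congrArg
    apply Finset.filter_congr
    intro x _
    tauto
  omega
end

section
/- Consider the triple (i, j, k) with i = k + j (the excluded case in Lemma 10). Then the closure of the corresponding braid has more than one component. Abstract permutation version: let c = (1 2 ⋯ i) ∈ S_i be the i-cycle and consider the permutation underlying the braid (VB ij)·B_k whose underlying permutation is c^j composed with the cycle (1 2 ⋯ k+1); when i = k+j and i ≥ 2, this permutation has a fixed point or a cycle of length < i, hence is not an i-cycle. -/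
/-! The permutation fixes `0`: the chain of adjacent transpositions `B_k` carries `0` to `k`,
and `j` steps of the rotation then carry `k` to `k + j = i ≡ 0`. A permutation of `Fin i`
with a fixed point moves fewer than `i` points, so it cannot be an `i`-cycle. -/

theorem Equiv.Perm.prod_reverse_map_swap_apply_zero {α : Type*} [DecidableEq α] (k : ℕ)
    (a : Fin (k + 1) → α) :
    ((List.finRange k).reverse.map fun m => Equiv.swap (a m.castSucc) (a m.succ)).prod (a 0) =
      a (Fin.last k) := by
  induction k with
  | zero => simp
  | succ k ih =>
    simpa [List.finRange_succ, List.map_reverse, Function.comp_def] using ih (a ∘ Fin.succ)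

theorem coe_finRotate_pow_apply {n : ℕ} (j : ℕ) (x : Fin n) :
    ((finRotate n ^ j) x : ℕ) = (x + j) % n := by
  induction j with
  | zero => simp [Nat.mod_eq_of_lt x.isLt]
  | succ j ih =>
    have : NeZero n := x.neZero
    rw [pow_succ', Equiv.Perm.mul_apply, finRotate_apply, Fin.val_add, ih, Fin.val_one',
      Nat.add_mod_mod, Nat.mod_add_mod, add_assoc]

theorem Equiv.Perm.card_support_lt_of_apply_eq {α : Type*} [Fintype α] [DecidableEq α]
    {p : Equiv.Perm α} {x : α} (hx : p x = x) : p.support.card < Fintype.card α :=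
  Finset.card_lt_univ_of_notMem (Equiv.Perm.notMem_support.mpr hx)

/-- The excluded case `i = k + j` of Lemma 10: the underlying permutation of
the braid of `(i,j,k)`, namely the `j`-th power of the `i`-cycle composed with
the `(k+1)`-cycle coming from `B_k = σ_k ⋯ σ_1`, is not an `i`-cycle, so the
closure has more than one component. -/
theorem stmt_15 (i j k : ℕ) (hik : i = k + j)
    (hk : k < i) :
    ¬ (let bk : Equiv.Perm (Fin i) :=
        (((List.finRange k).reverse).map (fun m =>
          Equiv.swap (⟨m.val, by have := m.isLt; omega⟩ : Fin i)
            ⟨m.val + 1, by have := m.isLt; omega⟩)).prod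
      ((finRotate i) ^ j * bk).IsCycle ∧
        ((finRotate i) ^ j * bk).support.card = i) := by
  rintro ⟨-, hcard⟩
  -- `Fin.castLE hk` is definitionally the `⟨m.val, _⟩` used in `bk`.
  have hbk := Equiv.Perm.prod_reverse_map_swap_apply_zero k (Fin.castLE hk)
  have hrot : (finRotate i ^ j) ⟨k, hk⟩ = ⟨0, by omega⟩ :=
    Fin.ext <| by rw [coe_finRotate_pow_apply, ← hik, Nat.mod_self]
  refine hcard.not_lt <| (Equiv.Perm.card_support_lt_of_apply_eq (x := ⟨0, by omega⟩) ?_).trans_eq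
    (Fintype.card_fin i)
  rw [Equiv.Perm.mul_apply]
  exact (congrArg _ hbk).trans hrot
end
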